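/- arXiv:1007.3780 — 3 statements merged into one kernel-verified Lean document; each statement's English description precedes it below -/
import Mathlib

section
/- Let k be a field, V a finite-dimensional k-vector space, S = GL(V), and H a closed algebraic subgroup of S, so that S is a (left) H-variety. Let h_H be an H-equivariant pretheory over k. Then the pull-back φ*_H : h_H(pt) → h_H(S) induced by the structure map φ : S → pt (with trivial H-action on pt) is surjective. -/
/-!
# Statement 0

Let `k` be a field, `V` a finite-dimensional `k`-vector space, `S = GL(V)`, and `H` a
closed algebraic subgroup of `S`, so that `S` is a (left) `H`-variety.  Let `h_H` be an
`H`-equivariant pretheory over `k`.  Then the pull-back `φ*_H : h_H(pt) → h_H(S)` induced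
by the structure map `φ : S → pt` (with trivial `H`-action on `pt`) is surjective.

Since the category of smooth `H`-varieties over `k` is not available in Mathlib, we model
it by an abstract category `C` equipped with a distinguished point object `pt = Spec k`,
affine spaces `𝔸ⁿ_k` (with trivial actions on the point), and a distinguished class of
(`H`-equivariant) open embeddings.  An `H`-equivariant pretheory is a contravariant
functor from `C` to abelian groups satisfying (H) homotopy invariance and (L)
localization.  The geometric input (from the paper, following Karpenko–Merkurjev), namely
that `S = GL(V)` embeds `S`-equivariantly (hence `H`-equivariantly) as an open subvariety
of the affine space `End_k(V) ≅ 𝔸^{(dim V)²}` compatibly with the structure maps to the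
point, is recorded by the hypotheses `hι`, `hfac`.
-/

open CategoryTheory

universe u v w

/-- An abstract model of the category of smooth `H`-varieties over a field `k` (for an
algebraic group `H`): a category equipped with a distinguished point `pt = Spec k` (with
trivial `H`-action), affine spaces `𝔸ⁿ_k` with their structure morphisms to the point,
and a distinguished class of (`H`-equivariant) open embeddings. -/
class SmoothHVarieties (C : Type u) [Category.{v} C] : Type (max u v) where
  /-- the point `Spec k` with trivial `H`-action -/
  pt : C
  /-- the affine space `𝔸ⁿ_k` -/
  aff : ℕ → C
  /-- the structure morphism `𝔸ⁿ_k → pt` -/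
  affStruct : ∀ n : ℕ, aff n ⟶ pt
  /-- the class of `H`-equivariant open embeddings -/
  IsOpenEmbedding : ∀ {X Y : C}, (X ⟶ Y) → Prop

open SmoothHVarieties

/-- An `H`-equivariant pretheory over `k` (Definition 2.1 of Gille–Zainoulline):
a contravariant functor `h_H` from the category of smooth `H`-varieties over `k` to
abelian groups satisfying

* (H) homotopy invariance: the pull-back along the (`H`-equivariant) structure map
  `𝔸ⁿ_k → pt` is an isomorphism, and
* (L) localization: the pull-back along any `H`-equivariant open embedding is surjective.
-/
structure EquivariantPretheory (C : Type u) [Category.{v} C] [SmoothHVarieties C] :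
    Type (max u v (w + 1)) where
  /-- the underlying contravariant functor to abelian groups -/
  h : Cᵒᵖ ⥤ AddCommGrpCat.{w}
  /-- (H) homotopy invariance -/
  homotopy : ∀ n : ℕ, Function.Bijective ⇑(h.map (affStruct (C := C) n).op)
  /-- (L) localization -/
  localization : ∀ {U X : C} (ι : U ⟶ X), IsOpenEmbedding ι →
    Function.Surjective ⇑(h.map ι.op)

namespace EquivariantPretheory

variable {C : Type u} [Category.{v} C] [SmoothHVarieties C]

theorem map_comp_affStruct_surjective (hH : EquivariantPretheory.{u, v, w} C) {U : C} {n : ℕ}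
    (ι : U ⟶ aff n) (hι : IsOpenEmbedding ι) :
    Function.Surjective ⇑(hH.h.map (ι ≫ affStruct n).op) := by
  rw [op_comp, hH.h.map_comp, AddCommGrpCat.coe_comp]
  exact (hH.localization ι hι).comp (hH.homotopy n).surjective

end EquivariantPretheory

theorem structure_map_pullback_surjective_general
    -- the base field `k` and the finite-dimensional `k`-vector space `V`
    (k : Type*) [Field k] (V : Type*) [AddCommGroup V] [Module k V]
    -- the category of smooth `H`-varieties over `k`, for `H` a closed subgroup of `GL(V)`
    {C : Type u} [Category.{v} C] [SmoothHVarieties C]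
    -- an `H`-equivariant pretheory over `k`
    (hH : EquivariantPretheory.{u, v, w} C)
    -- `S = GL(V)`, viewed as a smooth `H`-variety via left multiplication
    (S : C)
    -- the structure map `φ : S → pt` (trivial `H`-action on `pt`)
    (φ : S ⟶ pt (C := C))
    -- `S = GL(V)` embeds `H`-equivariantly as an open subvariety of the affine space
    -- `End_k(V) ≅ 𝔸^{(dim V)²}_k` ...
    (ι : S ⟶ aff (C := C) (Module.finrank k V ^ 2))
    (hι : IsOpenEmbedding (C := C) ι)
    -- ... compatibly with the structure maps to the point
    (hfac : φ = ι ≫ affStruct (Module.finrank k V ^ 2)) :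
    Function.Surjective ⇑(hH.h.map φ.op) := by
  subst hfac
  exact hH.map_comp_affStruct_surjective ι hι

/-- Lemma 4.1 of Gille–Zainoulline: for `S = GL(V)` viewed as an
`H`-variety, `H ⊆ S` a closed subgroup, and any `H`-equivariant pretheory `h_H`, the
pull-back `φ*_H : h_H(pt) → h_H(S)` along the structure map `φ : S → pt` is
surjective. -/
theorem structure_map_pullback_surjective
    -- the base field `k` and the finite-dimensional `k`-vector space `V`
    (k : Type*) [Field k] (V : Type*) [AddCommGroup V] [Module k V] [FiniteDimensional k V]
    -- the category of smooth `H`-varieties over `k`, for `H` a closed subgroup of `GL(V)`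
    {C : Type u} [Category.{v} C] [SmoothHVarieties C]
    -- an `H`-equivariant pretheory over `k`
    (hH : EquivariantPretheory.{u, v, w} C)
    -- `S = GL(V)`, viewed as a smooth `H`-variety via left multiplication
    (S : C)
    -- the structure map `φ : S → pt` (trivial `H`-action on `pt`)
    (φ : S ⟶ pt (C := C))
    -- `S = GL(V)` embeds `H`-equivariantly as an open subvariety of the affine space
    -- `End_k(V) ≅ 𝔸^{(dim V)²}_k` ...
    (ι : S ⟶ aff (C := C) (Module.finrank k V ^ 2))
    (hι : IsOpenEmbedding (C := C) ι)
    -- ... compatibly with the structure maps to the point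
    (hfac : φ = ι ≫ affStruct (Module.finrank k V ^ 2)) :
    Function.Surjective ⇑(hH.h.map φ.op) :=
  structure_map_pullback_surjective_general k V hH S φ ι hι hfac
end

section
/- Let k be a field, V a finite-dimensional k-vector space, S = GL(V), and H a closed algebraic subgroup of S. Let h_H be an H-equivariant pretheory over k, and let s ∈ S(k) be a k-rational point. Then the pull-back (μ_s)*_H : h_H(S) → h_H(S) induced by the right multiplication μ_s : S → S by s is the identity map. -/
/-!
We model the category of smooth `H`-varieties over `k` by an abstract category `C` with
a distinguished point, affine spaces and a class of (`H`-equivariant) open embeddings.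
The geometric facts recorded as hypotheses are: `S = GL(V)` sits as an `H`-equivariant
open subvariety of the affine space `End_k(V) ≅ 𝔸^{(dim V)²}` compatibly with the
structure maps (hypotheses `hι`, `hfac`), and right multiplication `μ_s` by the rational
point `s ∈ S(k)` is `H`-equivariant and commutes with the structure map `φ : S → pt`,
i.e. `φ ∘ μ_s = φ` (hypothesis `hμ`).

Homotopy invariance for `𝔸^{(dim V)²} → pt` and localization for the open
embedding `S ↪ 𝔸^{(dim V)²}` make `φ* : h_H(pt) → h_H(S)` surjective, and since `μ_s`
lies over `pt`, `μ_s*` fixes every class pulled back from the point.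
-/

open CategoryTheory

universe u v w

open SmoothHVarieties

theorem CategoryTheory.Functor.map_op_eq_id_of_comp_eq {C : Type u} [Category.{v} C]
    (F : Cᵒᵖ ⥤ AddCommGrpCat.{w}) {X Y : C} {f : X ⟶ X} {φ : X ⟶ Y}
    (hφ : Function.Surjective ⇑(F.map φ.op)) (hf : f ≫ φ = φ) :
    F.map f.op = 𝟙 (F.obj (Opposite.op X)) := by
  ext x
  obtain ⟨y, rfl⟩ := hφ x
  rw [← ConcreteCategory.comp_apply, ← F.map_comp, ← op_comp, hf]
  rfl

theorem EquivariantPretheory.map_surjective_of_isOpenEmbedding_aff {C : Type u}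
    [Category.{v} C] [SmoothHVarieties C] (hH : EquivariantPretheory.{u, v, w} C) {X : C}
    {n : ℕ} (ι : X ⟶ aff n) (hι : IsOpenEmbedding ι) :
    Function.Surjective ⇑(hH.h.map (ι ≫ affStruct n).op) := by
  rw [op_comp, hH.h.map_comp, ConcreteCategory.coe_comp]
  exact (hH.localization ι hι).comp (hH.homotopy n).surjective

theorem right_multiplication_pullback_eq_id_general
    -- the base field `k` and the finite-dimensional `k`-vector space `V`
    (k : Type*) [Field k] (V : Type*) [AddCommGroup V] [Module k V]
    -- the category of smooth `H`-varieties over `k`, for `H` a closed subgroup of `GL(V)`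
    {C : Type u} [Category.{v} C] [SmoothHVarieties C]
    -- an `H`-equivariant pretheory over `k`
    (hH : EquivariantPretheory.{u, v, w} C)
    -- `S = GL(V)`, viewed as a smooth `H`-variety via left multiplication
    (S : C)
    -- the structure map `φ : S → pt`
    (φ : S ⟶ pt (C := C))
    -- `S = GL(V)` embeds `H`-equivariantly as an open subvariety of the affine space
    -- `End_k(V) ≅ 𝔸^{(dim V)²}_k`, compatibly with the structure maps to the point
    (ι : S ⟶ aff (C := C) (Module.finrank k V ^ 2))
    (hι : IsOpenEmbedding (C := C) ι)
    (hfac : φ = ι ≫ affStruct (Module.finrank k V ^ 2))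
    -- right multiplication `μ_s : S → S` by a rational point `s ∈ S(k)`; it is
    -- `H`-equivariant and satisfies `φ ∘ μ_s = φ` as morphisms over `k`
    (μs : S ⟶ S)
    (hμ : μs ≫ φ = φ) :
    hH.h.map μs.op = 𝟙 (hH.h.obj (Opposite.op S)) := by
  have hφ : Function.Surjective ⇑(hH.h.map φ.op) :=
    hfac ▸ hH.map_surjective_of_isOpenEmbedding_aff ι hι
  exact hH.h.map_op_eq_id_of_comp_eq hφ hμ

/-- Lemma 4.2 of Gille–Zainoulline: for `S = GL(V)`, `H ⊆ S` a closed
subgroup, any `H`-equivariant pretheory `h_H` and any rational point `s ∈ S(k)`, the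
pull-back `(μ_s)*_H : h_H(S) → h_H(S)` along the right multiplication `μ_s` by `s` is
the identity. -/
theorem right_multiplication_pullback_eq_id
    -- the base field `k` and the finite-dimensional `k`-vector space `V`
    (k : Type*) [Field k] (V : Type*) [AddCommGroup V] [Module k V] [FiniteDimensional k V]
    -- the category of smooth `H`-varieties over `k`, for `H` a closed subgroup of `GL(V)`
    {C : Type u} [Category.{v} C] [SmoothHVarieties C]
    -- an `H`-equivariant pretheory over `k`
    (hH : EquivariantPretheory.{u, v, w} C)
    -- `S = GL(V)`, viewed as a smooth `H`-variety via left multiplication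
    (S : C)
    -- the structure map `φ : S → pt`
    (φ : S ⟶ pt (C := C))
    -- `S = GL(V)` embeds `H`-equivariantly as an open subvariety of the affine space
    -- `End_k(V) ≅ 𝔸^{(dim V)²}_k`, compatibly with the structure maps to the point
    (ι : S ⟶ aff (C := C) (Module.finrank k V ^ 2))
    (hι : IsOpenEmbedding (C := C) ι)
    (hfac : φ = ι ≫ affStruct (Module.finrank k V ^ 2))
    -- right multiplication `μ_s : S → S` by a rational point `s ∈ S(k)`; it is
    -- `H`-equivariant and satisfies `φ ∘ μ_s = φ` as morphisms over `k`
    (μs : S ⟶ S)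
    (hμ : μs ≫ φ = φ) :
    hH.h.map μs.op = 𝟙 (hH.h.obj (Opposite.op S)) :=
  right_multiplication_pullback_eq_id_general k V hH S φ ι hι hfac μs hμ
end

section
/- Let G be a split semisimple linear algebraic group over k with Borel subgroup B and split maximal torus T ⊆ B, let E be a generic G-torsor over k with respect to the essential B-equivariant pretheory CH_B of equivariant Chow groups, and let E/B be the twisted form of G/B by E. Then the ring ĥ_B(E) = CH(G/B) ⊗_{Image(res)} Z, the quotient of CH(G/B) by the ideal generated by non-constant elements of the image of the restriction map res : CH(E/B) → CH(G/B), is isomorphic to the Chow ring CH(G) of G. Moreover, for an arbitrary G-torsor E one has ĥ_B(E) ⊗_Z Q ≅ Q. -/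
/-!
Tensoring with `ℤ = A ⧸ ker ε` over `A` kills exactly the extension of `ker ε`, and `res` maps
`ker ε` onto the augmentation-trivial part of `Image(res)`; this identifies `ĥ_B(E)`.
For a generic torsor that part is the augmentation-trivial part of `Image(c)`, which, since
`augR ∘ c` is the constant-coefficient map, generates the ideal `(x_1, …, x_n)` defining `CH(G)`.
Finally `τ` times any augmentation-trivial class lies in `Image(c) ⊆ Image(res)`, so the
augmentation ideal of `ĥ_B(E)` is `τ`-torsion and vanishes after tensoring with `ℚ`.
-/

open scoped TensorProduct

namespace Algebra.TensorProduct

noncomputable def equivQuotMapKerOfSurjective {A B S : Type*} [CommRing A] [CommRing B]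
    [CommRing S] [Algebra A B] [Algebra A S] (h : Function.Surjective (algebraMap A S)) :
    B ⊗[A] S ≃ₐ[B] B ⧸ (RingHom.ker (algebraMap A S)).map (algebraMap A B) :=
  (congr AlgEquiv.refl
      (Ideal.quotientKerAlgEquivOfSurjective (f := Algebra.ofId A S) h).symm).trans
    (quotIdealMapEquivTensorQuot B _).symm

end Algebra.TensorProduct

theorem Ideal.map_ker_comp_eq_span {A R k : Type*} [CommRing A] [CommRing R] [CommRing k]
    (f : A →+* R) (g : R →+* k) :
    (RingHom.ker (g.comp f)).map f = Ideal.span {r | r ∈ Set.range f ∧ g r = 0} := by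
  rw [Ideal.map]
  congr 1
  ext r
  constructor
  · rintro ⟨a, ha, rfl⟩
    exact ⟨⟨a, rfl⟩, ha⟩
  · rintro ⟨⟨a, rfl⟩, ha⟩
    exact ⟨a, ha, rfl⟩

namespace MvPolynomial

theorem sub_C_constantCoeff_mem_idealOfVars {σ R : Type*} [CommRing R] (p : MvPolynomial σ R) :
    p - C (constantCoeff p) ∈ idealOfVars σ R := by
  rw [idealOfVars, ← Set.image_univ, mem_ideal_span_X_image]
  intro m hm
  have hm0 : m ≠ 0 := by
    rintro rfl
    simp [constantCoeff_eq] at hm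
  obtain ⟨i, hi⟩ := Finsupp.ne_iff.mp hm0
  exact ⟨i, Set.mem_univ i, hi⟩

theorem ker_constantCoeff {σ R : Type*} [CommRing R] :
    RingHom.ker (constantCoeff : MvPolynomial σ R →+* R) = idealOfVars σ R := by
  refine le_antisymm (fun p hp => ?_) ?_
  · simpa [RingHom.mem_ker.mp hp] using sub_C_constantCoeff_mem_idealOfVars p
  · rw [idealOfVars, Ideal.span_le]
    rintro _ ⟨i, rfl⟩
    simp

theorem span_range_inter_ker_eq_span_range_X {σ k R : Type*} [CommRing k] [CommRing R]
    (c : MvPolynomial σ k →+* R) (aug : R →+* k) (h : aug.comp c = constantCoeff) :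
    Ideal.span {r | r ∈ Set.range c ∧ aug r = 0} = Ideal.span (Set.range (c ∘ X)) := by
  rw [← Ideal.map_ker_comp_eq_span, h, ker_constantCoeff, idealOfVars, Ideal.map_span,
    Set.range_comp]

theorem intRingHom_comp_eq_constantCoeff {σ R : Type*} [CommRing R]
    (c : MvPolynomial σ ℤ →+* R) (aug : R →+* ℤ) (h : ∀ i, aug (c (X i)) = 0) :
    aug.comp c = constantCoeff :=
  ringHom_ext (fun _ => by simp) (fun i => by simp [h])

end MvPolynomial

theorem TensorProduct.rat_tmul_eq_zero_of_zsmul_eq_zero {M : Type*} [AddCommGroup M] {τ : ℤ}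
    (hτ : τ ≠ 0) (q : ℚ) {m : M} (hm : τ • m = 0) : q ⊗ₜ[ℤ] m = 0 := by
  have hτq : (τ : ℚ) ≠ 0 := Int.cast_ne_zero.mpr hτ
  calc q ⊗ₜ[ℤ] m = (τ • (q / τ)) ⊗ₜ[ℤ] m := by rw [zsmul_eq_mul, mul_div_cancel₀ q hτq]
    _ = (q / τ) ⊗ₜ[ℤ] (τ • m) := TensorProduct.smul_tmul _ _ _
    _ = 0 := by rw [hm, TensorProduct.tmul_zero]

noncomputable def ratTensorEquivOfKerTorsion {S : Type*} [CommRing S] (f : S →+* ℤ) {τ : ℤ}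
    (hτ : τ ≠ 0) (htors : ∀ s, f s = 0 → τ • s = 0) : ℚ ⊗[ℤ] S ≃+* ℚ :=
  let φ : ℚ ⊗[ℤ] S →ₐ[ℤ] ℚ := Algebra.TensorProduct.lift (AlgHom.id ℤ ℚ)
    ((Int.castRingHom ℚ).comp f).toIntAlgHom fun _ _ => Commute.all _ _
  have hφ (q : ℚ) (s : S) : φ (q ⊗ₜ s) = q * f s := Algebra.TensorProduct.lift_tmul _ _ _ q s
  have hinv (t : ℚ ⊗[ℤ] S) : φ t ⊗ₜ[ℤ] (1 : S) = t := by
    induction t using TensorProduct.induction_on with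
    | zero => simp
    | add u v hu hv => rw [map_add, TensorProduct.add_tmul, hu, hv]
    | tmul q s =>
      have hker : τ • (s - (f s : S)) = 0 := htors _ (by simp)
      have hs : q ⊗ₜ[ℤ] s = q ⊗ₜ[ℤ] (f s : S) := by
        rw [← sub_eq_zero, ← TensorProduct.tmul_sub]
        exact TensorProduct.rat_tmul_eq_zero_of_zsmul_eq_zero hτ q hker
      rw [hφ, hs, mul_comm, ← zsmul_eq_mul, TensorProduct.smul_tmul, zsmul_eq_mul, mul_one]
  RingEquiv.ofBijective φ.toRingHom
    ⟨Function.LeftInverse.injective (g := fun q => q ⊗ₜ[ℤ] (1 : S)) hinv,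
      fun q => ⟨q ⊗ₜ 1, by simp [hφ]⟩⟩

/-- example "Chow groups and the J-invariant" of Gille–Zainoulline:
for a generic `G`-torsor `E`, the ring
`ĥ_B(E) = CH(G/B) ⊗_{Image(res)} ℤ = R ⊗[A] ℤ` is the quotient of `CH(G/B)` by the
ideal generated by the non-constant (augmentation-trivial) elements of `Image(res)` and
is isomorphic to `CH(G)`; for an arbitrary `G`-torsor, `ĥ_B(E) ⊗_ℤ ℚ ≅ ℚ`. -/
theorem hat_CH_of_generic_torsor_iso_CH_of_G
    -- `R = CH(G/B)`, `A = CH(E/B)` and `CHG = CH(G)`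
    (R A CHG : Type*) [CommRing R] [CommRing A] [CommRing CHG]
    -- the restriction map `res : CH(E/B) → CH(G/B)`, i.e. the canonical map `(ψ_E)*_B`
    (res : A →+* R)
    -- the rank `n` of `G` and the first Chern classes `x i = c_1(L_{G/B}(χ_i))`
    (n : ℕ) (x : Fin n → R)
    -- the characteristic map `c : S(T*) = ℤ[χ_1, …, χ_n] → CH(G/B)`, with
    -- `c(χ_i) = c_1(L_{G/B}(χ_i))`
    (c : MvPolynomial (Fin n) ℤ →+* R)
    (hc : ∀ i : Fin n, c (MvPolynomial.X i) = x i)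
    -- the augmentation `ε : CH(E/B) → ℤ = CH(pt) = h̄_B(B_K)` and the augmentation
    -- (degree-zero part) `augR : CH(G/B) → ℤ`, compatibly
    (ε : A →+* ℤ) (augR : R →+* ℤ)
    (haug : augR.comp res = ε)
    -- the Chern classes are augmentation-trivial (they live in degree `1`)
    (hx : ∀ i : Fin n, augR (x i) = 0)
    -- the main theorem (Theorem 4.4): `Image(c) ⊆ Image(res)`, i.e. the characteristic
    -- subring consists of rational cycles
    (hmain : Set.range ⇑c ⊆ Set.range ⇑res)
    -- the image of the characteristic map is a subgroup of finite index in `CH(G/B)`,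
    -- measured by the torsion index `τ` of `G`
    (τ : ℕ) (hτpos : 0 < τ)
    (hτ : ∀ r : R, ∃ a : MvPolynomial (Fin n) ℤ, c a = (τ : ℤ) • r)
    -- Proposition 5.1/Corollary 5.3 for Chow groups:
    -- `CH(G) ≅ CH(G/B)/(c_1(L_{G/B}(χ_1)), …, c_1(L_{G/B}(χ_n)))`
    (hCHG : Nonempty (CHG ≃+* R ⧸ Ideal.span (Set.range x)))
    -- the `A = CH(E/B)`-algebra structures on `R = CH(G/B)` (via `res`) and on
    -- `ℤ = CH(pt)` (via `ε`), defining `ĥ_B(E) = R ⊗[A] ℤ`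
    [Algebra A R] [Algebra A ℤ]
    (halg₁ : algebraMap A R = res)
    (halg₂ : algebraMap A ℤ = ε) :
    -- `ĥ_B(E)` is the quotient of `CH(G/B)` by the ideal generated by the non-constant
    -- elements of the image of `res` ...
    Nonempty ((R ⊗[A] ℤ) ≃+*
        (R ⧸ Ideal.span {r : R | r ∈ Set.range ⇑res ∧ augR r = 0})) ∧
    -- ... if `E` is generic, i.e. `Image(c) = Image(res)`, then `ĥ_B(E) ≅ CH(G)` ...
    (Set.range ⇑c = Set.range ⇑res → Nonempty ((R ⊗[A] ℤ) ≃+* CHG)) ∧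
    -- ... and for an arbitrary `G`-torsor `E`, `ĥ_B(E) ⊗_ℤ ℚ ≅ ℚ`
    Nonempty ((ℚ ⊗[ℤ] (R ⊗[A] ℤ)) ≃+* ℚ) := by
  have hεsurj : Function.Surjective (algebraMap A ℤ) := fun m => ⟨m, map_intCast _ m⟩
  have hker : (RingHom.ker (algebraMap A ℤ)).map (algebraMap A R) =
      Ideal.span {r : R | r ∈ Set.range ⇑res ∧ augR r = 0} := by
    rw [halg₁, halg₂, ← haug, Ideal.map_ker_comp_eq_span]
  have hgeneric : Set.range ⇑c = Set.range ⇑res →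
      Ideal.span {r : R | r ∈ Set.range ⇑res ∧ augR r = 0} = Ideal.span (Set.range x) := by
    intro hgen
    have hcomp : augR.comp c = MvPolynomial.constantCoeff :=
      MvPolynomial.intRingHom_comp_eq_constantCoeff c augR fun i => by rw [hc, hx]
    rw [← hgen, MvPolynomial.span_range_inter_ker_eq_span_range_X c augR hcomp,
      show c ∘ MvPolynomial.X = x from funext hc]
  set I := Ideal.span {r : R | r ∈ Set.range ⇑res ∧ augR r = 0}
  let e : (R ⊗[A] ℤ) ≃+* R ⧸ I :=
    (Algebra.TensorProduct.equivQuotMapKerOfSurjective hεsurj).toRingEquiv.trans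
      (Ideal.quotEquivOfEq hker)
  refine ⟨⟨e⟩, fun hgen => ⟨e.trans ((Ideal.quotEquivOfEq (hgeneric hgen)).trans
    hCHG.some.symm)⟩, ?_⟩
  let augI : R ⧸ I →+* ℤ := Ideal.Quotient.lift I augR fun _ hr =>
    (Ideal.span_le (I := RingHom.ker augR)).mpr (fun _ hs => hs.2) hr
  have htors : ∀ u : R ⧸ I, augI u = 0 → (τ : ℤ) • u = 0 := by
    intro u hu
    obtain ⟨r, rfl⟩ := Ideal.Quotient.mk_surjective u
    replace hu : augR r = 0 := hu
    obtain ⟨a, ha⟩ := hτ r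
    rw [← map_zsmul, ← ha, Ideal.Quotient.eq_zero_iff_mem]
    exact Ideal.subset_span ⟨hmain ⟨a, rfl⟩, by rw [ha, map_zsmul, hu, smul_zero]⟩
  exact ⟨(Algebra.TensorProduct.congr (AlgEquiv.refl (R := ℤ) (A₁ := ℚ))
    e.toIntAlgEquiv).toRingEquiv.trans
      (ratTensorEquivOfKerTorsion augI (by exact_mod_cast hτpos.ne') htors)⟩
end
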